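/- Fix real numbers a ≤ b and σ. Then there exists a constant C > 0 such that for every τ ≥ 1 and all x, y ∈ [a, b]: | e^{τ(y − x)} ∫_0^∞ Ai(σ − x + τ² + 2^{1/3} u) · Ai(σ − y + τ² + 2^{1/3} u) du | ≤ C/√τ. In particular the kernel K_Ai^{(τ,−τ)}(σ−x, σ−y) = e^{τ(y−x)} ∫_0^∞ Ai(σ−x+τ²+2^{1/3}u) Ai(σ−y+τ²+2^{1/3}u) du tends to zero uniformly on compact sets as τ → +∞. -/

import Mathlib

open MeasureTheory Set Complex

/-- `e^{iπ/3}`. -/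
noncomputable def eP : ℂ := Complex.exp (Real.pi / 3 * Complex.I)

/-- `e^{-iπ/3}`. -/
noncomputable def eM : ℂ := Complex.exp (-(Real.pi / 3) * Complex.I)

/-- The Airy function `Ai(x)`. -/
noncomputable def Ai (x : ℝ) : ℂ :=
  (2 * Real.pi * Complex.I)⁻¹ *
    ∫ u in Ioi (0 : ℝ),
      (eP * Complex.exp (-(u : ℂ) ^ 3 / 3 - x * (eP * u))
        - eM * Complex.exp (-(u : ℂ) ^ 3 / 3 - x * (eM * u)))

/-!
Translating the contour of `Ai t` to the right by any `m ∈ ℝ` does not change the integral: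
the `m`-derivative of the translated integral is the integral over `u ∈ (0, ∞)` of the
`u`-derivative of `exp(z³/3 - tz)` at `z = m + e^{iπ/3}u` minus that at `z = m + e^{-iπ/3}u`,
a function which vanishes at `u = 0` and at infinity. Along these rays the phase has real part
`m³/3 - tm + (m² - t)u/2 - mu²/2 - u³/3`, so translating by `m = τ` when `t ≥ τ² - c` gives
`|Ai t| ≤ C exp(τ³/3 - tτ)`. Inserting this at `t = σ - x + τ² + 2^{1/3}u` bounds the kernel
by `C exp(2τ(y - σ) - 4τ³/3)`, which decays much faster than `1/√τ`.
-/

open Filter Topology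

lemma exists_cubic_le_sub (A B : ℝ) :
    ∃ C : ℝ, ∀ u : ℝ, 0 ≤ u → A * u + B * u ^ 2 - u ^ 3 / 3 ≤ C - u := by
  obtain ⟨β, hβ0, hβB⟩ : ∃ β : ℝ, 0 < β ∧ B + 1 / 2 ≤ β :=
    ⟨max B 0 + 1 / 2, by positivity, by linarith [le_max_left B 0]⟩
  refine ⟨(A + 1) ^ 2 / 2 + 4 / 3 * β ^ 3, fun u hu => ?_⟩
  have linear : (A + 1) * u ≤ (A + 1) ^ 2 / 2 + u ^ 2 / 2 := by
    nlinarith [sq_nonneg (A + 1 - u)]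
  have cubic : β * u ^ 2 - u ^ 3 / 3 ≤ 4 / 3 * β ^ 3 := by
    nlinarith [mul_nonneg (sq_nonneg (u - 2 * β)) (add_nonneg hu hβ0.le)]
  nlinarith [mul_le_mul_of_nonneg_left hβB (sq_nonneg u)]

lemma integrableOn_exp_sub_Ioi (C : ℝ) : IntegrableOn (fun u => Real.exp (C - u)) (Ioi 0) := by
  have h := (exp_neg_integrableOn_Ioi 0 zero_lt_one).const_mul (Real.exp C)
  simp only [neg_mul, one_mul, ← Real.exp_add, ← sub_eq_add_neg] at h
  exact h

lemma integral_exp_sub_Ioi (C : ℝ) : ∫ u in Ioi (0 : ℝ), Real.exp (C - u) = Real.exp C := by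
  simp only [sub_eq_add_neg, Real.exp_add, integral_const_mul, integral_exp_neg_Ioi_zero, mul_one]

section
variable {E : Type*} [NormedAddCommGroup E] {f : ℝ → E} {C : ℝ}

lemma integrableOn_Ioi_of_norm_le_exp_sub (hf : Continuous f)
    (h : ∀ u, 0 ≤ u → ‖f u‖ ≤ Real.exp (C - u)) : IntegrableOn f (Ioi 0) := by
  refine (integrableOn_exp_sub_Ioi C).mono' hf.aestronglyMeasurable ?_
  filter_upwards [ae_restrict_mem measurableSet_Ioi] with u hu using h u (le_of_lt hu)

lemma norm_integral_Ioi_le_exp [NormedSpace ℝ E]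
    (h : ∀ u, 0 ≤ u → ‖f u‖ ≤ Real.exp (C - u)) : ‖∫ u in Ioi 0, f u‖ ≤ Real.exp C := by
  rw [← integral_exp_sub_Ioi C]
  refine norm_integral_le_of_norm_le (integrableOn_exp_sub_Ioi C) ?_
  filter_upwards [ae_restrict_mem measurableSet_Ioi] with u hu using h u (le_of_lt hu)

end

lemma exp_sub_le_div_sqrt (C : ℝ) {τ : ℝ} (hτ : 0 < τ) :
    Real.exp (C - τ) ≤ Real.exp C / Real.sqrt τ := by
  have hsqrt : Real.sqrt τ ≤ Real.exp τ := by
    calc Real.sqrt τ ≤ τ + 1 := (Real.sqrt_le_left (by linarith)).2 (by nlinarith)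
      _ ≤ Real.exp τ := Real.add_one_le_exp τ
  rw [le_div_iff₀ (Real.sqrt_pos.2 hτ), sub_eq_add_neg, Real.exp_add, mul_assoc]
  refine mul_le_of_le_one_right (Real.exp_pos C).le ?_
  calc Real.exp (-τ) * Real.sqrt τ ≤ Real.exp (-τ) * Real.exp τ := by gcongr
    _ = 1 := by rw [← Real.exp_add, neg_add_cancel, Real.exp_zero]

lemma eP_re : eP.re = 1 / 2 := by
  rw [eP, show (Real.pi : ℂ) / 3 = ((Real.pi / 3 : ℝ) : ℂ) by push_cast; rfl,
    Complex.exp_ofReal_mul_I_re, Real.cos_pi_div_three]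

lemma eP_im_sq : eP.im ^ 2 = 3 / 4 := by
  rw [eP, show (Real.pi : ℂ) / 3 = ((Real.pi / 3 : ℝ) : ℂ) by push_cast; rfl,
    Complex.exp_ofReal_mul_I_im, Real.sin_pi_div_three, div_pow, Real.sq_sqrt (by norm_num)]
  norm_num

lemma eM_re : eM.re = 1 / 2 := by
  rw [eM, show -((Real.pi : ℂ) / 3) = ((-(Real.pi / 3) : ℝ) : ℂ) by push_cast; rfl,
    Complex.exp_ofReal_mul_I_re, Real.cos_neg, Real.cos_pi_div_three]

lemma eM_im_sq : eM.im ^ 2 = 3 / 4 := by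
  rw [eM, show -((Real.pi : ℂ) / 3) = ((-(Real.pi / 3) : ℝ) : ℂ) by push_cast; rfl,
    Complex.exp_ofReal_mul_I_im, Real.sin_neg, Real.sin_pi_div_three, neg_sq, div_pow,
    Real.sq_sqrt (by norm_num)]
  norm_num

noncomputable def airyExp (t : ℝ) (z : ℂ) : ℂ := cexp (z ^ 3 / 3 - t * z)

noncomputable def airyExp' (t : ℝ) (z : ℂ) : ℂ := (z ^ 2 - t) * airyExp t z

lemma hasDerivAt_airyExp (t : ℝ) (z : ℂ) : HasDerivAt (airyExp t) (airyExp' t z) z := by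
  have h := (((hasDerivAt_pow 3 z).div_const 3).sub ((hasDerivAt_id z).const_mul (t : ℂ))).cexp
  exact h.congr_deriv (by simp only [airyExp', airyExp, Pi.sub_apply, id]; push_cast; ring)

lemma HasDerivAt.airyExp {g : ℝ → ℂ} {g' : ℂ} {s : ℝ} (t : ℝ) (hg : HasDerivAt g g' s) :
    HasDerivAt (fun s => airyExp t (g s)) (airyExp' t (g s) * g') s :=
  (hasDerivAt_airyExp t (g s)).comp s hg

@[fun_prop]
lemma continuous_airyExp (t : ℝ) : Continuous (airyExp t) := by
  unfold airyExp; fun_prop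

@[fun_prop]
lemma continuous_airyExp' (t : ℝ) : Continuous (airyExp' t) :=
  (by fun_prop : Continuous fun z : ℂ => z ^ 2 - t).mul (continuous_airyExp t)

section
variable {e : ℂ}

lemma norm_eq_one_of_re_of_im_sq (he : e.re = 1 / 2) (he' : e.im ^ 2 = 3 / 4) : ‖e‖ = 1 := by
  rw [Complex.norm_def, Complex.normSq_apply, ← sq, ← sq, he, he']
  norm_num

lemma pow_three_eq_neg_one_of_re_of_im_sq (he : e.re = 1 / 2) (he' : e.im ^ 2 = 3 / 4) :
    e ^ 3 = -1 := by
  apply Complex.ext <;>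
    simp only [pow_succ, pow_zero, one_mul, Complex.mul_re, Complex.mul_im, he, Complex.neg_re,
      Complex.one_re, Complex.neg_im, Complex.one_im]
  · linear_combination (-3 / 2 : ℝ) * he'
  · linear_combination (-e.im) * he'

noncomputable def airyRayExponent (t m u : ℝ) : ℝ :=
  m ^ 3 / 3 + m ^ 2 * u / 2 - m * u ^ 2 / 2 - u ^ 3 / 3 - t * m - t * u / 2

lemma re_airyExponent_ray (he : e.re = 1 / 2) (he' : e.im ^ 2 = 3 / 4) (t m u : ℝ) :
    (((m : ℂ) + e * u) ^ 3 / 3 - t * ((m : ℂ) + e * u)).re = airyRayExponent t m u := by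
  simp only [airyRayExponent, pow_succ, pow_zero, one_mul, Complex.sub_re, Complex.div_re,
    Complex.mul_re, Complex.mul_im, Complex.add_re, Complex.add_im, Complex.ofReal_re,
    Complex.ofReal_im, he, Complex.normSq_ofNat, Complex.re_ofNat, Complex.im_ofNat]
  linear_combination (-(m + u / 2) * u ^ 2) * he'

lemma exists_airyRayExponent_le (t M : ℝ) : ∃ C, ∀ m u : ℝ, |m| ≤ M → 0 ≤ u →
    (M + u) ^ 2 + |t| + airyRayExponent t m u ≤ C - u := by
  obtain ⟨C, hC⟩ := exists_cubic_le_sub (2 * M + M ^ 2 / 2 + |t| / 2) (1 + M / 2)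
  refine ⟨M ^ 2 + |t| + M ^ 3 / 3 + |t| * M + C, fun m u hm hu => ?_⟩
  obtain ⟨hm₁, hm₂⟩ := abs_le.1 hm
  have hcube : m ^ 3 ≤ M ^ 3 := by nlinarith [sq_nonneg (m + M), sq_nonneg (m - M)]
  have hsq : m ^ 2 * u ≤ M ^ 2 * u := mul_le_mul_of_nonneg_right (sq_le_sq' hm₁ hm₂) hu
  have hlin : -m * u ^ 2 ≤ M * u ^ 2 := mul_le_mul_of_nonneg_right (by linarith) (sq_nonneg u)
  have htm : -(t * m) ≤ |t| * M := by
    calc -(t * m) ≤ |t| * |m| := by rw [← abs_mul]; exact neg_le_abs _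
      _ ≤ |t| * M := mul_le_mul_of_nonneg_left hm (abs_nonneg t)
  have htu : -t * u ≤ |t| * u := mul_le_mul_of_nonneg_right (neg_le_abs t) hu
  simp only [airyRayExponent]
  linarith [hC u hu]

lemma norm_airyExp_ray (he : e.re = 1 / 2) (he' : e.im ^ 2 = 3 / 4) (t m u : ℝ) :
    ‖airyExp t (m + e * u)‖ = Real.exp (airyRayExponent t m u) := by
  rw [airyExp, Complex.norm_exp, re_airyExponent_ray he he']

lemma norm_airyExp'_ray_le (he : e.re = 1 / 2) (he' : e.im ^ 2 = 3 / 4) {t m u M : ℝ}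
    (hm : |m| ≤ M) (hu : 0 ≤ u) :
    ‖airyExp' t (m + e * u)‖ ≤ Real.exp ((M + u) ^ 2 + |t| + airyRayExponent t m u) := by
  have hz : ‖(m : ℂ) + e * u‖ ≤ M + u := by
    calc ‖(m : ℂ) + e * u‖ ≤ ‖(m : ℂ)‖ + ‖e * u‖ := norm_add_le _ _
      _ = |m| + u := by
        rw [norm_mul, norm_eq_one_of_re_of_im_sq he he', Complex.norm_real, Complex.norm_real,
          Real.norm_of_nonneg hu, one_mul, Real.norm_eq_abs]
      _ ≤ M + u := by linarith
  have hpoly : ‖((m : ℂ) + e * u) ^ 2 - t‖ ≤ (M + u) ^ 2 + |t| := by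
    calc ‖((m : ℂ) + e * u) ^ 2 - t‖ ≤ ‖(m : ℂ) + e * u‖ ^ 2 + ‖(t : ℂ)‖ := by
          rw [← norm_pow]; exact norm_sub_le _ _
      _ ≤ (M + u) ^ 2 + |t| := by rw [Complex.norm_real, Real.norm_eq_abs]; gcongr
  rw [airyExp', norm_mul, norm_airyExp_ray he he', Real.exp_add]
  gcongr
  exact hpoly.trans ((le_add_of_nonneg_right zero_le_one).trans (Real.add_one_le_exp _))

lemma tendsto_airyExp_ray (he : e.re = 1 / 2) (he' : e.im ^ 2 = 3 / 4) (t m : ℝ) :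
    Tendsto (fun u : ℝ => airyExp t (m + e * u)) atTop (𝓝 0) := by
  obtain ⟨C, hC⟩ := exists_airyRayExponent_le t |m|
  refine squeeze_zero_norm' ?_
    (by simpa using Real.tendsto_exp_neg_atTop_nhds_zero.const_mul (Real.exp C))
  filter_upwards [eventually_ge_atTop 0] with u hu
  rw [norm_airyExp_ray he he', ← Real.exp_add]
  exact Real.exp_le_exp.2 (by linarith [hC m u le_rfl hu, sq_nonneg (|m| + u), abs_nonneg t])
end

/-- The integrand of `Ai t` along the contour translated to the right by `m`. -/
noncomputable def airyRayIntegrand (t m u : ℝ) : ℂ :=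
  eP * airyExp t (m + eP * u) - eM * airyExp t (m + eM * u)

noncomputable def airyRayIntegrand' (t m u : ℝ) : ℂ :=
  eP * airyExp' t (m + eP * u) - eM * airyExp' t (m + eM * u)

lemma continuous_airyRayIntegrand (t m : ℝ) : Continuous (airyRayIntegrand t m) := by
  unfold airyRayIntegrand; fun_prop

lemma continuous_airyRayIntegrand' (t m : ℝ) : Continuous (airyRayIntegrand' t m) := by
  unfold airyRayIntegrand'; fun_prop

lemma norm_eP_mul_sub_eM_mul_le {a b : ℂ} {r : ℝ} (ha : ‖a‖ ≤ Real.exp r)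
    (hb : ‖b‖ ≤ Real.exp r) : ‖eP * a - eM * b‖ ≤ Real.exp (r + 1) := by
  calc ‖eP * a - eM * b‖ ≤ ‖a‖ + ‖b‖ := by
        simpa [norm_mul, norm_eq_one_of_re_of_im_sq eP_re eP_im_sq,
          norm_eq_one_of_re_of_im_sq eM_re eM_im_sq] using norm_sub_le (eP * a) (eM * b)
    _ ≤ 2 * Real.exp r := by linarith
    _ ≤ Real.exp (r + 1) := by
        rw [Real.exp_add, mul_comm]
        gcongr
        linarith [Real.add_one_le_exp 1]

lemma norm_airyRayIntegrand_le (t m u : ℝ) :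
    ‖airyRayIntegrand t m u‖ ≤ Real.exp (airyRayExponent t m u + 1) :=
  norm_eP_mul_sub_eM_mul_le (norm_airyExp_ray eP_re eP_im_sq t m u).le
    (norm_airyExp_ray eM_re eM_im_sq t m u).le

lemma norm_airyRayIntegrand'_le {t m u M : ℝ} (hm : |m| ≤ M) (hu : 0 ≤ u) :
    ‖airyRayIntegrand' t m u‖ ≤ Real.exp ((M + u) ^ 2 + |t| + airyRayExponent t m u + 1) :=
  norm_eP_mul_sub_eM_mul_le (norm_airyExp'_ray_le eP_re eP_im_sq hm hu)
    (norm_airyExp'_ray_le eM_re eM_im_sq hm hu)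

lemma exists_norm_airyRayIntegrand_le (t M : ℝ) : ∃ C, ∀ m u : ℝ, |m| ≤ M → 0 ≤ u →
    ‖airyRayIntegrand t m u‖ ≤ Real.exp (C - u) ∧
      ‖airyRayIntegrand' t m u‖ ≤ Real.exp (C - u) := by
  obtain ⟨C, hC⟩ := exists_airyRayExponent_le t M
  refine ⟨C + 1, fun m u hm hu => ⟨?_, ?_⟩⟩
  · refine (norm_airyRayIntegrand_le t m u).trans (Real.exp_le_exp.2 ?_)
    linarith [hC m u hm hu, sq_nonneg (M + u), abs_nonneg t]
  · refine (norm_airyRayIntegrand'_le hm hu).trans (Real.exp_le_exp.2 ?_)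
    linarith [hC m u hm hu]

lemma hasDerivAt_airyRayIntegrand (t m u : ℝ) :
    HasDerivAt (fun m => airyRayIntegrand t m u) (airyRayIntegrand' t m u) m := by
  have h (e : ℂ) :
      HasDerivAt (fun m : ℝ => airyExp t (m + e * u)) (airyExp' t (m + e * u)) m := by
    simpa using ((hasDerivAt_id m).ofReal_comp.add_const (e * u)).airyExp t
  exact ((h eP).const_mul eP).sub ((h eM).const_mul eM)

lemma integral_airyRayIntegrand'_eq_zero (t m : ℝ) :
    ∫ u in Ioi 0, airyRayIntegrand' t m u = 0 := by
  have h (e : ℂ) (u : ℝ) : HasDerivAt (fun u : ℝ => airyExp t (m + e * u))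
      (airyExp' t (m + e * u) * e) u := by
    simpa using (((hasDerivAt_id u).ofReal_comp.const_mul e).const_add (m : ℂ)).airyExp t
  obtain ⟨C, hC⟩ := exists_norm_airyRayIntegrand_le t |m|
  have hint : IntegrableOn (airyRayIntegrand' t m) (Ioi 0) :=
    integrableOn_Ioi_of_norm_le_exp_sub (continuous_airyRayIntegrand' t m)
      fun u hu => (hC m u le_rfl hu).2
  have hlim := (tendsto_airyExp_ray eP_re eP_im_sq t m).sub
    (tendsto_airyExp_ray eM_re eM_im_sq t m)
  rw [sub_zero] at hlim
  have hftc := integral_Ioi_of_hasDerivAt_of_tendsto'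
    (fun u _ => ((h eP u).sub (h eM u)).congr_deriv (by simp only [airyRayIntegrand', mul_comm]))
    hint hlim
  simpa using hftc

lemma hasDerivAt_integral_airyRayIntegrand (t m₀ : ℝ) :
    HasDerivAt (fun m => ∫ u in Ioi 0, airyRayIntegrand t m u) 0 m₀ := by
  obtain ⟨C, hC⟩ := exists_norm_airyRayIntegrand_le t (|m₀| + 1)
  have hball : ∀ m ∈ Metric.ball m₀ 1, |m| ≤ |m₀| + 1 := fun m hm => by
    rw [Metric.mem_ball, Real.dist_eq] at hm
    linarith [abs_sub_abs_le_abs_sub m m₀]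
  have key := hasDerivAt_integral_of_dominated_loc_of_deriv_le
    (bound := fun u => Real.exp (C - u)) (Metric.ball_mem_nhds m₀ one_pos)
    (Eventually.of_forall fun m => (continuous_airyRayIntegrand t m).aestronglyMeasurable)
    (integrableOn_Ioi_of_norm_le_exp_sub (continuous_airyRayIntegrand t m₀)
      fun u hu => (hC m₀ u (by linarith [abs_nonneg m₀]) hu).1)
    (continuous_airyRayIntegrand' t m₀).aestronglyMeasurable
    (by filter_upwards [ae_restrict_mem measurableSet_Ioi] with u hu m hm
        exact (hC m u (hball m hm) (le_of_lt hu)).2)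
    (integrableOn_exp_sub_Ioi C)
    (Eventually.of_forall fun u m _ => hasDerivAt_airyRayIntegrand t m u)
  simpa [integral_airyRayIntegrand'_eq_zero] using key.2

lemma Ai_eq_integral_airyRayIntegrand (t m : ℝ) :
    Ai t = (2 * Real.pi * Complex.I)⁻¹ * ∫ u in Ioi 0, airyRayIntegrand t m u := by
  have hconst := is_const_of_deriv_eq_zero
    (fun m => (hasDerivAt_integral_airyRayIntegrand t m).differentiableAt)
    (fun m => (hasDerivAt_integral_airyRayIntegrand t m).deriv) m 0
  have hray {e : ℂ} (he : e ^ 3 = -1) (u : ℝ) :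
      airyExp t ((0 : ℝ) + e * u) = cexp (-(u : ℂ) ^ 3 / 3 - t * (e * u)) := by
    rw [airyExp, ofReal_zero, zero_add, mul_pow, he]
    ring_nf
  rw [hconst, Ai]
  simp only [airyRayIntegrand,
    hray (pow_three_eq_neg_one_of_re_of_im_sq eP_re eP_im_sq),
    hray (pow_three_eq_neg_one_of_re_of_im_sq eM_re eM_im_sq)]

lemma exists_norm_Ai_le_exp (c : ℝ) : ∃ C, ∀ τ t : ℝ, 0 ≤ τ → τ ^ 2 - c ≤ t →
    ‖Ai t‖ ≤ Real.exp (C + τ ^ 3 / 3 - t * τ) := by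
  obtain ⟨C, hC⟩ := exists_cubic_le_sub (c / 2) 0
  refine ⟨C + 1, fun τ t hτ ht => ?_⟩
  have hint :
      ‖∫ u in Ioi 0, airyRayIntegrand t τ u‖ ≤ Real.exp (C + 1 + τ ^ 3 / 3 - t * τ) := by
    refine norm_integral_Ioi_le_exp fun u hu =>
      (norm_airyRayIntegrand_le t τ u).trans (Real.exp_le_exp.2 ?_)
    have hlin : (τ ^ 2 - t) * u ≤ c * u := mul_le_mul_of_nonneg_right (by linarith) hu
    have hquad : 0 ≤ τ * u ^ 2 := by positivity
    simp only [airyRayExponent]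
    linarith [hC u hu]
  have hfactor : ‖(2 * Real.pi * Complex.I)⁻¹‖ ≤ 1 := by
    rw [norm_inv, norm_mul, norm_mul, Complex.norm_I, Complex.norm_real,
      Real.norm_of_nonneg Real.pi_pos.le, Complex.norm_ofNat, mul_one]
    exact inv_le_one_of_one_le₀ (by linarith [Real.pi_gt_three])
  rw [Ai_eq_integral_airyRayIntegrand t τ, norm_mul]
  exact (mul_le_of_le_one_left (norm_nonneg _) hfactor).trans hint

lemma exists_norm_integral_Ai_mul_Ai_le (κ : ℝ) : ∃ C, ∀ τ c X Y : ℝ, 0 ≤ τ → 0 ≤ c →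
    1 ≤ c * τ → τ ^ 2 - κ ≤ X → τ ^ 2 - κ ≤ Y →
    ‖∫ u in Ioi 0, Ai (X + c * u) * Ai (Y + c * u)‖ ≤
      Real.exp (C + 2 * τ ^ 3 / 3 - (X + Y) * τ) := by
  obtain ⟨C, hC⟩ := exists_norm_Ai_le_exp κ
  refine ⟨2 * C, fun τ c X Y hτ hc hcτ hX hY => norm_integral_Ioi_le_exp fun u hu => ?_⟩
  have hcu : 0 ≤ c * u := mul_nonneg hc hu
  rw [norm_mul]
  refine (mul_le_mul (hC τ _ hτ (by linarith)) (hC τ _ hτ (by linarith)) (norm_nonneg _)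
    (Real.exp_pos _).le).trans ?_
  rw [← Real.exp_add]
  have hdecay : u ≤ u * (c * τ) := le_mul_of_one_le_right hu hcτ
  exact Real.exp_le_exp.2 (by linarith)

theorem airyKernelTau_uniform_decay_general (a b σ : ℝ) :
    ∃ C > (0 : ℝ), ∀ τ : ℝ, 1 ≤ τ → ∀ x ∈ Icc a b, ∀ y ∈ Icc a b,
      ‖Complex.exp ((τ * (y - x) : ℝ)) *
          ∫ u in Ioi (0 : ℝ),
            Ai (σ - x + τ ^ 2 + (2 : ℝ) ^ ((1 : ℝ) / 3) * u) *
              Ai (σ - y + τ ^ 2 + (2 : ℝ) ^ ((1 : ℝ) / 3) * u)‖ ≤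
        C / Real.sqrt τ := by
  obtain ⟨C₁, hC₁⟩ := exists_norm_integral_Ai_mul_Ai_le (b - σ)
  obtain ⟨C₂, hC₂⟩ := exists_cubic_le_sub (2 * (b - σ)) 0
  refine ⟨Real.exp (C₁ + C₂), Real.exp_pos _, fun τ hτ x hx y hy => ?_⟩
  have hc : (1 : ℝ) ≤ 2 ^ ((1 : ℝ) / 3) := Real.one_le_rpow (by norm_num) (by norm_num)
  have hint := hC₁ τ _ (σ - x + τ ^ 2) (σ - y + τ ^ 2) (by linarith) (by linarith)
    (one_le_mul_of_one_le_of_one_le hc hτ) (by linarith [hx.2]) (by linarith [hy.2])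
  have hyb : τ * y ≤ τ * b := mul_le_mul_of_nonneg_left hy.2 (by linarith)
  have hcube : 0 ≤ τ ^ 3 := by positivity
  rw [norm_mul, Complex.norm_exp_ofReal]
  calc _ ≤ Real.exp (τ * (y - x) +
          (C₁ + 2 * τ ^ 3 / 3 - (σ - x + τ ^ 2 + (σ - y + τ ^ 2)) * τ)) := by
        rw [Real.exp_add]; gcongr
    _ ≤ Real.exp (C₁ + C₂ - τ) := Real.exp_le_exp.2 (by linarith [hC₂ τ (by linarith)])
    _ ≤ Real.exp (C₁ + C₂) / Real.sqrt τ := exp_sub_le_div_sqrt _ (by linarith)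

/-- The kernel `K_Ai^{(τ,−τ)}(σ−x, σ−y)
  = e^{τ(y−x)} ∫₀^∞ Ai(σ−x+τ²+2^{1/3}u) Ai(σ−y+τ²+2^{1/3}u) du`
tends to zero uniformly on compact sets as `τ → +∞`: for fixed `a ≤ b` and `σ`, there is
`C > 0` such that for all `τ ≥ 1` and all `x, y ∈ [a,b]` the kernel is bounded by `C/√τ`. -/
theorem airyKernelTau_uniform_decay (a b σ : ℝ) (hab : a ≤ b) :
    ∃ C > (0 : ℝ), ∀ τ : ℝ, 1 ≤ τ → ∀ x ∈ Icc a b, ∀ y ∈ Icc a b,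
      ‖Complex.exp ((τ * (y - x) : ℝ)) *
          ∫ u in Ioi (0 : ℝ),
            Ai (σ - x + τ ^ 2 + (2 : ℝ) ^ ((1 : ℝ) / 3) * u) *
              Ai (σ - y + τ ^ 2 + (2 : ℝ) ^ ((1 : ℝ) / 3) * u)‖ ≤
        C / Real.sqrt τ :=
  airyKernelTau_uniform_decay_general a b σ
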